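/- arXiv:1610.00544 — 2 statements merged into one kernel-verified Lean document; each statement's English description precedes it below -/
import Mathlib

section
/- Let n be an odd perfect number and let q be a prime dividing n whose exponent β in the prime factorization of n is odd. Then q ≡ 1 (mod 4). -/
/- Euler's argument: σ is multiplicative, so σ(q^β) divides σ(n) = 2n, which is 2 times an odd
number. If q ≡ 3 (mod 4), then σ(q^β) = 1 + q + ⋯ + q^β is a sum of the even number β + 1 of
terms alternately ≡ 1 and ≡ -1 (mod 4), hence divisible by 4, which is impossible. -/

open ArithmeticFunction Finset
open scoped ArithmeticFunction.sigma

theorem four_dvd_sum_range_pow_of_mod_four_eq_three {q k : ℕ} (hq : q % 4 = 3) (hk : Even k) :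
    4 ∣ ∑ i ∈ range k, q ^ i := by
  have hq_neg_one : (q : ZMod 4) = -1 := by
    rw [← ZMod.natCast_mod, hq]
    rfl
  rw [← ZMod.natCast_eq_zero_iff]
  push_cast
  rw [hq_neg_one, neg_one_geom_sum, if_pos hk]

theorem sigma_one_ordProj_dvd {n p : ℕ} (hp : p.Prime) (hn : n ≠ 0) :
    σ 1 (p ^ n.factorization p) ∣ σ 1 n := by
  have hcop : (p ^ n.factorization p).Coprime (n / p ^ n.factorization p) :=
    (Nat.coprime_ordCompl hp hn).pow_left _
  conv_rhs => rw [← Nat.ordProj_mul_ordCompl_eq_self n p]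
  rw [isMultiplicative_sigma.map_mul_of_coprime hcop]
  exact dvd_mul_right _ _

theorem Nat.Perfect.sigma_one_eq {n : ℕ} (h : n.Perfect) : σ 1 n = 2 * n := by
  rw [sigma_one_apply, ← Nat.perfect_iff_sum_divisors_eq_two_mul h.2]
  exact h

/-- If `n` is an odd perfect number and `q` is a prime dividing `n` with odd
multiplicity, then `q ≡ 1 [MOD 4]`. -/
theorem stmt11 (n q : ℕ) (hn_odd : Odd n) (hn_perf : n.Perfect)
    (hq_prime : q.Prime) (hq_dvd : q ∣ n)
    (β : ℕ) (hβ : β = n.factorization q) (hβ_odd : Odd β) :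
    q % 4 = 1 := by
  have hq_odd : q % 2 = 1 := Nat.odd_iff.mp (hn_odd.of_dvd_nat hq_dvd)
  by_contra hq_ne_one
  have hq_three : q % 4 = 3 := by omega
  have h_four_dvd_sigma : 4 ∣ σ 1 (q ^ β) := by
    rw [sigma_one_apply_prime_pow hq_prime]
    exact four_dvd_sum_range_pow_of_mod_four_eq_three hq_three hβ_odd.add_one
  have h_four_dvd : 4 ∣ 2 * n := by
    rw [← hn_perf.sigma_one_eq]
    exact h_four_dvd_sigma.trans (hβ ▸ sigma_one_ordProj_dvd hq_prime hn_perf.2.ne')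
  have hn_two : n % 2 = 1 := Nat.odd_iff.mp hn_odd
  omega
end

section
/- If n is an odd perfect number, then its prime factorization has the form n = p₁^{α₁} ⋯ p_k^{α_k} · q^{β}, where p₁, …, p_k, q are distinct odd primes, k ≥ 2, each α_i is even, β is odd, and both q ≡ 1 (mod 4) and β ≡ 1 (mod 4). -/
open Finset

/-!
Write `σ(n) = ∏_{p ∣ n} (1 + p + ⋯ + p^{aₚ})`. Since `σ(n) = 2n` with `n` odd, the prime `2`
divides exactly one factor, that of some prime `q`, and `4` divides none. For odd `p`, the factor
`1 + p + ⋯ + p^a` has the parity of `a + 1`, so every exponent other than `β = a_q` is even and `β`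
is odd. If `q ≡ 3 (mod 4)` the factor of `q` would be divisible by `q + 1`, hence by `4`; so
`q ≡ 1 (mod 4)`, the factor is `≡ β + 1 (mod 4)`, and `β ≡ 1 (mod 4)`.
Finally `σ(n)/n < ∏_{p ∣ n} p/(p - 1)`, which is at most `3/2 · 5/4 < 2` when `n` has at most two
odd prime factors.
-/

theorem add_one_dvd_geom_sum_two_mul {R : Type*} [CommSemiring R] (x : R) (m : ℕ) :
    x + 1 ∣ ∑ i ∈ range (2 * m), x ^ i := by
  induction m with
  | zero => simp
  | succ m ih =>
    rw [mul_add_one, sum_range_succ, sum_range_succ, add_assoc]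
    exact ih.add ⟨x ^ (2 * m), by ring⟩

theorem Nat.geom_sum_modEq_of_modEq_one {p m : ℕ} (hp : p ≡ 1 [MOD m]) (t : ℕ) :
    ∑ i ∈ range t, p ^ i ≡ t [MOD m] :=
  calc ∑ i ∈ range t, p ^ i ≡ ∑ _i ∈ range t, 1 [MOD m] :=
        Nat.ModEq.sum fun i _ => by simpa using hp.pow i
    _ = t := by simp

theorem Odd.two_dvd_geom_sum_iff {p : ℕ} (hp : Odd p) (t : ℕ) :
    2 ∣ ∑ i ∈ range t, p ^ i ↔ Even t := by
  rw [even_iff_two_dvd]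
  exact (Nat.geom_sum_modEq_of_modEq_one (Nat.odd_iff.1 hp) t).dvd_iff dvd_rfl

theorem Odd.mod_four_eq_one_of_geom_sum_mod_four_eq_two {q t : ℕ} (hq : Odd q)
    (h : (∑ i ∈ range t, q ^ i) % 4 = 2) : q % 4 = 1 ∧ t % 4 = 2 := by
  have ht : Even t := (hq.two_dvd_geom_sum_iff t).1 (by omega)
  have hq1 : q % 4 = 1 := by
    obtain ⟨m, rfl⟩ := ht
    have h4 : 4 ∣ q + 1 → 4 ∣ ∑ i ∈ range (m + m), q ^ i := fun hdvd =>
      hdvd.trans (by simpa [two_mul] using add_one_dvd_geom_sum_two_mul q m)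
    have := Nat.odd_iff.1 hq
    omega
  have := Nat.geom_sum_modEq_of_modEq_one (m := 4) hq1 t
  exact ⟨hq1, by unfold Nat.ModEq at this; omega⟩

theorem Prime.exists_dvd_not_sq_dvd_of_not_sq_dvd_prod {M ι : Type*} [CommMonoidWithZero M]
    [DecidableEq ι] {π : M} (hπ : Prime π) {s : Finset ι} {f : ι → M}
    (hdvd : π ∣ ∏ i ∈ s, f i) (hsq : ¬ π ^ 2 ∣ ∏ i ∈ s, f i) :
    ∃ j ∈ s, π ∣ f j ∧ ¬ π ^ 2 ∣ f j ∧ ∀ i ∈ s, i ≠ j → ¬ π ∣ f i := by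
  obtain ⟨j, hj, hπj⟩ := (hπ.dvd_finsetProd_iff f).1 hdvd
  rw [← mul_prod_erase s f hj] at hsq
  refine ⟨j, hj, hπj, fun h => hsq (dvd_mul_of_dvd_left h _), fun i hi hij hπi => hsq ?_⟩
  rw [sq]
  exact mul_dvd_mul hπj (hπi.trans (dvd_prod_of_mem f (mem_erase.2 ⟨hij, hi⟩)))

theorem Nat.Perfect.exists_euler_prime {n : ℕ} (hn : n.Perfect) (hodd : Odd n) :
    ∃ q ∈ n.primeFactors, q % 4 = 1 ∧ n.factorization q % 4 = 1 ∧
      ∀ p ∈ n.primeFactors, p ≠ q → Even (n.factorization p) := by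
  have hσ : ∏ p ∈ n.primeFactors, ∑ i ∈ range (n.factorization p + 1), p ^ i = 2 * n := by
    rw [← Nat.sum_divisors hn.2.ne']
    exact (Nat.perfect_iff_sum_divisors_eq_two_mul hn.2).1 hn
  have hoddp : ∀ p ∈ n.primeFactors, Odd p := fun p hp =>
    hodd.of_dvd_nat (Nat.dvd_of_mem_primeFactors hp)
  have h2n : ¬ 2 ^ 2 ∣ 2 * n := by
    obtain ⟨k, rfl⟩ := hodd
    omega
  obtain ⟨q, hq, hq2, hq4, hrest⟩ := Nat.prime_two.prime.exists_dvd_not_sq_dvd_of_not_sq_dvd_prod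
    (hσ ▸ dvd_mul_right 2 n) (hσ ▸ h2n)
  rw [sq] at hq4
  obtain ⟨hq1, hβ⟩ := (hoddp q hq).mod_four_eq_one_of_geom_sum_mod_four_eq_two
    (t := n.factorization q + 1) (by omega)
  refine ⟨q, hq, hq1, by omega, fun p hp hpq => ?_⟩
  simpa [Nat.even_add_one] using ((hoddp p hp).two_dvd_geom_sum_iff _).not.1 (hrest p hp hpq)

theorem Nat.sum_divisors_mul_prod_sub_one_lt {n : ℕ} (hn : 1 < n) :
    (∑ d ∈ n.divisors, d) * ∏ p ∈ n.primeFactors, (p - 1) < n * ∏ p ∈ n.primeFactors, p := by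
  have hn0 : n ≠ 0 := by omega
  rw [Nat.sum_divisors hn0, ← prod_mul_distrib]
  calc _ < ∏ p ∈ n.primeFactors, p ^ (n.factorization p + 1) := by
        refine prod_lt_prod_of_nonempty (fun p hp => ?_) (fun p hp => ?_)
          (Nat.nonempty_primeFactors.2 hn)
        all_goals
          have hp2 := (Nat.prime_of_mem_primeFactors hp).two_le
          have := Nat.le_self_pow (n := n.factorization p + 1) (by omega) p
          rw [geom_sum_mul_of_one_le (by omega)]
          omega
    _ = n * ∏ p ∈ n.primeFactors, p := by
        simp only [pow_succ, prod_mul_distrib, ← Nat.prod_primeFactors_pow_factorization hn0]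

theorem prod_le_two_mul_prod_sub_one {s : Finset ℕ} (hs : ∀ p ∈ s, 3 ≤ p) (hcard : s.card ≤ 2) :
    ∏ p ∈ s, p ≤ 2 * ∏ p ∈ s, (p - 1) := by
  rcases (by omega : s.card = 0 ∨ s.card = 1 ∨ s.card = 2) with h | h | h
  · simp [card_eq_zero.1 h]
  · obtain ⟨a, rfl⟩ := card_eq_one.1 h
    have := hs a (mem_singleton_self a)
    simp only [prod_singleton]
    omega
  · obtain ⟨a, b, hab, rfl⟩ := card_eq_two.1 h
    obtain ⟨u, rfl⟩ : ∃ u, a = u + 3 := ⟨a - 3, by have := hs a (by simp); omega⟩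
    obtain ⟨w, rfl⟩ : ∃ w, b = w + 3 := ⟨b - 3, by have := hs b (by simp); omega⟩
    have huw : 1 ≤ u + w := by omega
    rw [prod_pair hab, prod_pair hab, show (u + 3 - 1) * (w + 3 - 1) = (u + 2) * (w + 2) from rfl]
    nlinarith

theorem Nat.Perfect.three_le_card_primeFactors {n : ℕ} (hn : n.Perfect) (hodd : Odd n) :
    3 ≤ n.primeFactors.card := by
  by_contra! hcard
  have hn1 : n ≠ 1 := by
    rintro rfl
    simp [Nat.Perfect] at hn
  have hlt := Nat.sum_divisors_mul_prod_sub_one_lt (n := n) (by have := hn.2; omega)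
  rw [(Nat.perfect_iff_sum_divisors_eq_two_mul hn.2).1 hn, mul_comm 2, mul_assoc] at hlt
  have hge : ∀ p ∈ n.primeFactors, 3 ≤ p := fun p hp => by
    have := (Nat.prime_of_mem_primeFactors hp).two_le
    have := Nat.odd_iff.1 (hodd.of_dvd_nat (Nat.dvd_of_mem_primeFactors hp))
    omega
  exact absurd (Nat.lt_of_mul_lt_mul_left hlt)
    (not_lt.2 (prod_le_two_mul_prod_sub_one hge (by omega)))

theorem Finset.exists_fin_enum_prod {α M : Type*} [CommMonoid M] (s : Finset α) (f : α → M) :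
    ∃ p : Fin s.card → α, Function.Injective p ∧ (∀ i, p i ∈ s) ∧ ∏ i, f (p i) = ∏ x ∈ s, f x :=
  ⟨fun i => s.equivFin.symm i, Subtype.val_injective.comp s.equivFin.symm.injective,
    fun i => (s.equivFin.symm i).2, by
      rw [← s.prod_coe_sort]
      exact s.equivFin.symm.prod_comp fun x => f x⟩

/-- If `n` is an odd perfect number, then its prime factorization has the form
`n = p₁^{α₁} ⋯ p_k^{α_k} · q^β` with `p₁, …, p_k, q` distinct odd primes,
`k ≥ 2`, each `αᵢ` even, `β` odd, `q ≡ 1 [MOD 4]` and `β ≡ 1 [MOD 4]`. -/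
theorem stmt13 (n : ℕ) (hn_odd : Odd n) (hn_perf : n.Perfect) :
    ∃ (k : ℕ) (p : Fin k → ℕ) (α : Fin k → ℕ) (q β : ℕ),
      2 ≤ k ∧
      (∀ i, (p i).Prime) ∧ (∀ i, Odd (p i)) ∧ Function.Injective p ∧
      q.Prime ∧ Odd q ∧ (∀ i, p i ≠ q) ∧
      (∀ i, Even (α i)) ∧ (∀ i, 0 < α i) ∧ Odd β ∧
      q % 4 = 1 ∧ β % 4 = 1 ∧
      n = (∏ i, p i ^ α i) * q ^ β := by
  have hn0 : n ≠ 0 := hn_perf.2.ne'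
  have hprime : ∀ p ∈ n.primeFactors, p.Prime ∧ Odd p ∧ 0 < n.factorization p := fun p hp =>
    have hdvd := Nat.dvd_of_mem_primeFactors hp
    have hpp := Nat.prime_of_mem_primeFactors hp
    ⟨hpp, hn_odd.of_dvd_nat hdvd, hpp.factorization_pos_of_dvd hn0 hdvd⟩
  obtain ⟨q, hq, hq1, hβ, heven⟩ := hn_perf.exists_euler_prime hn_odd
  obtain ⟨p, hp_inj, hp_mem, hp_prod⟩ :=
    (n.primeFactors.erase q).exists_fin_enum_prod fun p => p ^ n.factorization p
  have hk : 2 ≤ (n.primeFactors.erase q).card := by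
    have := hn_perf.three_le_card_primeFactors hn_odd
    rw [card_erase_of_mem hq]
    omega
  have hmem : ∀ i, p i ≠ q ∧ p i ∈ n.primeFactors := fun i => mem_erase.1 (hp_mem i)
  refine ⟨_, p, fun i => n.factorization (p i), q, n.factorization q, hk,
    fun i => (hprime _ (hmem i).2).1, fun i => (hprime _ (hmem i).2).2.1, hp_inj,
    (hprime q hq).1, (hprime q hq).2.1, fun i => (hmem i).1,
    fun i => heven _ (hmem i).2 (hmem i).1, fun i => (hprime _ (hmem i).2).2.2,
    Nat.odd_iff.2 (by omega), hq1, hβ, ?_⟩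
  rw [hp_prod, prod_erase_mul _ _ hq]
  exact Nat.prod_primeFactors_pow_factorization hn0
end
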